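/- arXiv:1705.01091 — 4 statements merged into one kernel-verified Lean document; each statement's English description precedes it below -/
import Mathlib

section
/- (Verification theorem / Theorem 1.) Let l : A × B → [0,1] satisfy the Blackwell condition: for all γ ∈ ℝ^N₊ and f ∈ A^N the set Γ(γ,f) = {p ∈ Δ : ⟨γ, r(p,f,b)⟩ ≤ 0 for all b ∈ B} is nonempty, where r^i(p,f,b) = l(⟨p,f⟩,b) − l(f^i,b). Let Φ : ℝ^N → ℝ be twice continuously differentiable, nondecreasing in each coordinate, with Φ(x) ≥ max{x₁,…,x_N} for all x and (1/2)⟨Φ_xx(x)h,h⟩ ≤ c for all x and all h with |hᵢ| ≤ 1. Define the strategy p*_t ∈ Γ(Φ_x(X*_t), f_t) and the state process X*₀ = 0, X*_{t+1} = X*_t + r(p*_t, f_t, b_t)/√n. Then for any sequences (f_t)_{t=0}^{n−1} in A^N and (b_t)_{t=0}^{n−1} in B, the regret R_n = Σ_{t=0}^{n−1} l(⟨p*_t,f_t⟩, b_t) − min_{1≤i≤N} Σ_{t=0}^{n−1} l(f^i_t, b_t) satisfies R_n ≤ (c + Φ(0))·√n. -/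
/-!
Along the trajectory, the first-order term of the Taylor expansion of the potential `Φ` is
`⟨Φ_x(X*_t), r_t⟩ / √n ≤ 0` by the choice `p*_t ∈ Γ(Φ_x(X*_t), f_t)`, while the second-order term
is at most `c / n` because `|r_t^i| ≤ 1`. Hence `Φ(X*_t) ≤ Φ(0) + t c / n`, and since
`X*_n = (Σ_t r_t) / √n`, the regret against expert `i` is `√n X*_n^i ≤ √n Φ(X*_n) ≤ (c + Φ(0)) √n`.
-/

open Finset

theorem le_add_deriv_add_of_hasDerivAt {g g' g'' : ℝ → ℝ} {C : ℝ}
    (hg : ∀ s, HasDerivAt g (g' s) s) (hg' : ∀ s, HasDerivAt g' (g'' s) s)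
    (hC : ∀ s, g'' s ≤ 2 * C) :
    g 1 ≤ g 0 + g' 0 + C := by
  -- `s ↦ C s² - g s` is convex, so it lies above its tangent line at `0`.
  set ψ : ℝ → ℝ := fun s => C * s ^ 2 - g s
  have hψ : ∀ s, HasDerivAt ψ (C * (2 * s) - g' s) s := fun s =>
    (((hasDerivAt_pow 2 s).const_mul C).sub (hg s)).congr_deriv (by ring)
  have hψ' : ∀ s, HasDerivAt (fun s => C * (2 * s) - g' s) (2 * C - g'' s) s := fun s =>
    ((((hasDerivAt_id s).const_mul 2).const_mul C).sub (hg' s)).congr_deriv (by simp; ring)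
  have hderiv : deriv ψ = fun s => C * (2 * s) - g' s := funext fun s => (hψ s).deriv
  have hconvex : ConvexOn ℝ Set.univ ψ := by
    refine Monotone.convexOn_univ_of_deriv (fun s => (hψ s).differentiableAt) ?_
    rw [hderiv]
    exact monotone_of_deriv_nonneg (fun s => (hψ' s).differentiableAt)
      fun s => by rw [(hψ' s).deriv]; linarith [hC s]
  have htangent : deriv ψ 0 ≤ slope ψ 0 1 :=
    hconvex.deriv_le_slope (Set.mem_univ 0) (Set.mem_univ 1) one_pos (hψ 0).differentiableAt
  rw [hderiv, slope_def_field] at htangent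
  norm_num [ψ] at htangent
  linarith

theorem ContDiff.le_add_fderiv_add {E : Type*} [NormedAddCommGroup E] [NormedSpace ℝ E]
    {Φ : E → ℝ} (hΦ : ContDiff ℝ 2 Φ) {C : ℝ} (x h : E)
    (hC : ∀ y, fderiv ℝ (fderiv ℝ Φ) y h h ≤ 2 * C) :
    Φ (x + h) ≤ Φ x + fderiv ℝ Φ x h + C := by
  have hline : ∀ s : ℝ, HasDerivAt (fun s : ℝ => x + s • h) h s := fun s => by
    simpa using ((hasDerivAt_id s).smul_const h).const_add x
  have hΦ' : ContDiff ℝ 1 (fderiv ℝ Φ) := hΦ.fderiv_right le_rfl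
  have hΦline : ∀ s : ℝ, HasDerivAt (fun s : ℝ => Φ (x + s • h)) (fderiv ℝ Φ (x + s • h) h) s :=
    fun s => ((hΦ.differentiable two_ne_zero _).hasFDerivAt).comp_hasDerivAt s (hline s)
  have hΦ'line : ∀ s : ℝ, HasDerivAt (fun s : ℝ => fderiv ℝ Φ (x + s • h) h)
      (fderiv ℝ (fderiv ℝ Φ) (x + s • h) h h) s := fun s =>
    (((hΦ'.differentiable one_ne_zero _).hasFDerivAt).comp_hasDerivAt s (hline s)).clm_apply
      (hasDerivAt_const s h) |>.congr_deriv (by simp)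
  simpa using le_add_deriv_add_of_hasDerivAt hΦline hΦ'line fun s => hC _

theorem ContinuousLinearMap.apply_eq_sum_apply_single_mul {ι : Type*} [Fintype ι]
    [DecidableEq ι] (T : (ι → ℝ) →L[ℝ] ℝ) (v : ι → ℝ) :
    T v = ∑ i, T (Pi.single i 1) * v i := by
  conv_lhs => rw [← univ_sum_single v]
  simp only [map_sum]
  refine sum_congr rfl fun i _ => ?_
  rw [show Pi.single i (v i) = v i • Pi.single i (1 : ℝ) by
    rw [← Pi.single_smul, smul_eq_mul, mul_one], map_smul, smul_eq_mul, mul_comm]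

theorem ContDiff.le_add_smul_of_sum_fderiv_single_mul_nonpos {ι : Type*} [Fintype ι]
    [DecidableEq ι] {Φ : (ι → ℝ) → ℝ} (hΦ : ContDiff ℝ 2 Φ) {c : ℝ}
    (hhess : ∀ x h : ι → ℝ, (∀ i, |h i| ≤ 1) →
      (1 / 2 : ℝ) * fderiv ℝ (fderiv ℝ Φ) x h h ≤ c)
    {x r : ι → ℝ} (hr : ∀ i, |r i| ≤ 1)
    (hdescent : ∑ i, fderiv ℝ Φ x (Pi.single i 1) * r i ≤ 0) {a : ℝ} (ha : 0 ≤ a) :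
    Φ (x + a • r) ≤ Φ x + a ^ 2 * c := by
  have hlinear : fderiv ℝ Φ x (a • r) ≤ 0 := by
    rw [map_smul, smul_eq_mul, ContinuousLinearMap.apply_eq_sum_apply_single_mul]
    exact mul_nonpos_of_nonneg_of_nonpos ha hdescent
  have hquadratic : ∀ y, fderiv ℝ (fderiv ℝ Φ) y (a • r) (a • r) ≤ 2 * (a ^ 2 * c) := by
    intro y
    have hhess_r := hhess y r hr
    simp only [map_smul, smul_apply, smul_eq_mul]
    nlinarith [sq_nonneg a]
  linarith [hΦ.le_add_fderiv_add x (a • r) hquadratic]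

theorem le_add_mul_of_forall_lt_le_add {u : ℕ → ℝ} {n : ℕ} {d : ℝ}
    (h : ∀ t < n, u (t + 1) ≤ u t + d) : u n ≤ u 0 + n * d := by
  have hsum : ∑ t ∈ range n, (u (t + 1) - u t) ≤ ∑ _t ∈ range n, d :=
    sum_le_sum fun t ht => by linarith [h t (mem_range.1 ht)]
  rw [sum_range_sub, sum_const, card_range, nsmul_eq_mul] at hsum
  linarith

theorem abs_map_sum_smul_sub_le_one {V B ι : Type*} [AddCommGroup V] [Module ℝ V] [Fintype ι]
    {A : Set V} (hA : Convex ℝ A) {l : V → B → ℝ} (hl01 : ∀ a ∈ A, ∀ b, l a b ∈ Set.Icc (0 : ℝ) 1)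
    {p : ι → ℝ} (hp0 : ∀ j, 0 ≤ p j) (hp1 : ∑ j, p j = 1) {f : ι → V} (hf : ∀ j, f j ∈ A)
    (b : B) (i : ι) :
    |l (∑ j, p j • f j) b - l (f i) b| ≤ 1 := by
  have hpA : ∑ j, p j • f j ∈ A := hA.sum_mem (fun j _ => hp0 j) hp1 fun j _ => hf j
  exact abs_sub_le_of_nonneg_of_le (hl01 _ hpA b).1 (hl01 _ hpA b).2
    (hl01 _ (hf i) b).1 (hl01 _ (hf i) b).2

theorem statement_7_general {V B : Type*} [AddCommGroup V] [Module ℝ V] {N n : ℕ}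
    (hN : 0 < N) (hn : 0 < n)
    (A : Set V) (hA : Convex ℝ A) (l : V → B → ℝ)
    (hl01 : ∀ a ∈ A, ∀ b, l a b ∈ Set.Icc (0 : ℝ) 1)
    -- the potential
    (Φ : (Fin N → ℝ) → ℝ) (c : ℝ)
    (hΦ : ContDiff ℝ 2 Φ)
    (hmax : ∀ (x : Fin N → ℝ) (i : Fin N), x i ≤ Φ x)
    (hhess : ∀ x h : Fin N → ℝ, (∀ i, |h i| ≤ 1) →
      (1 / 2 : ℝ) * fderiv ℝ (fderiv ℝ Φ) x h h ≤ c)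
    -- data of the game and the strategy
    (f : ℕ → Fin N → V) (hf : ∀ t i, f t i ∈ A) (b : ℕ → B)
    (p : ℕ → Fin N → ℝ) (X : ℕ → Fin N → ℝ)
    (hX0 : X 0 = 0)
    (hXrec : ∀ t, t < n → ∀ i, X (t + 1) i =
      X t i + (l (∑ j, p t j • f t j) (b t) - l (f t i) (b t)) / Real.sqrt n)
    (hpΔ : ∀ t, t < n → (∀ i, 0 ≤ p t i) ∧ ∑ i, p t i = 1)
    -- `p*_t ∈ Γ(Φ_x(X*_t), f_t)` : the Blackwell condition along the trajectory
    (hpΓ : ∀ t, t < n → ∀ b' : B,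
      ∑ i, fderiv ℝ Φ (X t) (Pi.single i 1) *
        (l (∑ j, p t j • f t j) b' - l (f t i) b') ≤ 0) :
    (∑ t ∈ Finset.range n, l (∑ j, p t j • f t j) (b t)) -
      (Finset.univ.inf' (Finset.univ_nonempty_iff.mpr (Fin.pos_iff_nonempty.mp hN))
        (fun i => ∑ t ∈ Finset.range n, l (f t i) (b t)))
      ≤ (c + Φ 0) * Real.sqrt n := by
  have hsqrt : 0 < Real.sqrt n := Real.sqrt_pos.mpr (by exact_mod_cast hn)
  set r : ℕ → Fin N → ℝ := fun t i => l (∑ j, p t j • f t j) (b t) - l (f t i) (b t)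
  have hstep : ∀ t < n, Φ (X (t + 1)) ≤ Φ (X t) + c / n := by
    intro t ht
    have hX : X (t + 1) = X t + (Real.sqrt n)⁻¹ • r t :=
      funext fun i => by simp [hXrec t ht i, r, div_eq_inv_mul]
    have hr : ∀ i, |r t i| ≤ 1 :=
      abs_map_sum_smul_sub_le_one hA hl01 (hpΔ t ht).1 (hpΔ t ht).2 (hf t) (b t)
    have hΦstep := hΦ.le_add_smul_of_sum_fderiv_single_mul_nonpos hhess hr (hpΓ t ht (b t))
      (inv_nonneg.2 hsqrt.le)
    rwa [← hX, inv_pow, Real.sq_sqrt (Nat.cast_nonneg n), inv_mul_eq_div] at hΦstep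
  have hpotential : Φ (X n) ≤ Φ 0 + c := by
    have := le_add_mul_of_forall_lt_le_add (u := fun t => Φ (X t)) hstep
    rwa [hX0, mul_div_cancel₀ c (by positivity)] at this
  have hregret : ∀ i, ∑ t ∈ range n, r t i = Real.sqrt n * X n i := by
    intro i
    have htelescope := sum_range_sub (fun t => X t i) n
    rw [sum_congr rfl fun t ht => by rw [hXrec t (mem_range.1 ht) i, add_sub_cancel_left],
      ← sum_div, hX0, Pi.zero_apply, sub_zero, div_eq_iff hsqrt.ne'] at htelescope
    linarith
  obtain ⟨i, -, hi⟩ := exists_mem_eq_inf' (univ_nonempty_iff.mpr (Fin.pos_iff_nonempty.mp hN))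
    fun i => ∑ t ∈ range n, l (f t i) (b t)
  rw [hi, ← sum_sub_distrib, hregret, mul_comm (Real.sqrt n)]
  exact mul_le_mul_of_nonneg_right (by linarith [hmax (X n) i]) hsqrt.le

/-- Verification theorem / Theorem 1 of the paper. Under the
Blackwell condition for the loss `l : A × B → [0,1]`, any C² potential `Φ`,
nondecreasing in each coordinate, with `Φ(x) ≥ maxᵢ xᵢ` and Hessian bound
`(1/2)⟨Φ_xx(x)h,h⟩ ≤ c` for `|hᵢ| ≤ 1`, and any strategy `p*_t ∈ Γ(Φ_x(X*_t), f_t)`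
with state `X*₀ = 0`, `X*_{t+1} = X*_t + r(p*_t,f_t,b_t)/√n`, produces regret
`R_n ≤ (c + Φ(0))√n` for all sequences of advice and outcomes. -/
theorem statement_7 {V B : Type*} [AddCommGroup V] [Module ℝ V] {N n : ℕ}
    (hN : 0 < N) (hn : 0 < n)
    (A : Set V) (hA : Convex ℝ A) (l : V → B → ℝ)
    (hl01 : ∀ a ∈ A, ∀ b, l a b ∈ Set.Icc (0 : ℝ) 1)
    -- Blackwell condition for `l`
    (hBlackwell : ∀ γ : Fin N → ℝ, (∀ i, 0 ≤ γ i) →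
      ∀ f : Fin N → V, (∀ i, f i ∈ A) →
        ∃ p : Fin N → ℝ, (∀ i, 0 ≤ p i) ∧ (∑ i, p i = 1) ∧
          ∀ b, ∑ i, γ i * (l (∑ j, p j • f j) b - l (f i) b) ≤ 0)
    -- the potential
    (Φ : (Fin N → ℝ) → ℝ) (c : ℝ) (hc : 0 ≤ c)
    (hΦ : ContDiff ℝ 2 Φ)
    (hmono : ∀ x y : Fin N → ℝ, (∀ i, x i ≤ y i) → Φ x ≤ Φ y)
    (hmax : ∀ (x : Fin N → ℝ) (i : Fin N), x i ≤ Φ x)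
    (hhess : ∀ x h : Fin N → ℝ, (∀ i, |h i| ≤ 1) →
      (1 / 2 : ℝ) * fderiv ℝ (fderiv ℝ Φ) x h h ≤ c)
    -- data of the game and the strategy
    (f : ℕ → Fin N → V) (hf : ∀ t i, f t i ∈ A) (b : ℕ → B)
    (p : ℕ → Fin N → ℝ) (X : ℕ → Fin N → ℝ)
    (hX0 : X 0 = 0)
    (hXrec : ∀ t, t < n → ∀ i, X (t + 1) i =
      X t i + (l (∑ j, p t j • f t j) (b t) - l (f t i) (b t)) / Real.sqrt n)
    (hpΔ : ∀ t, t < n → (∀ i, 0 ≤ p t i) ∧ ∑ i, p t i = 1)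
    -- `p*_t ∈ Γ(Φ_x(X*_t), f_t)` : the Blackwell condition along the trajectory
    (hpΓ : ∀ t, t < n → ∀ b' : B,
      ∑ i, fderiv ℝ Φ (X t) (Pi.single i 1) *
        (l (∑ j, p t j • f t j) b' - l (f t i) b') ≤ 0) :
    (∑ t ∈ Finset.range n, l (∑ j, p t j • f t j) (b t)) -
      (Finset.univ.inf' (Finset.univ_nonempty_iff.mpr (Fin.pos_iff_nonempty.mp hN))
        (fun i => ∑ t ∈ Finset.range n, l (f t i) (b t)))
      ≤ (c + Φ 0) * Real.sqrt n :=
  statement_7_general hN hn A hA l hl01 Φ c hΦ hmax hhess f hf b p X hX0 hXrec hpΔ hpΓ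
end

section
/- With the exponential potential Φ(x) = η⁻¹ ln(Σᵢ e^{η xᵢ}), the bound of the verification theorem is R_n/√n ≤ η/2 + (ln N)/η, and the choice η = √(2 ln N) yields R_n ≤ √(2 n ln N). -/
/-!
Track the potential `W_t = ∑ᵢ exp (-c Lᵢ_t)` with `c = η / √n`. Since
`exp (-x) ≤ 1 - x + x² / 2` for `x ≥ 0`, a loss vector in `[0, 1]` multiplies the potential
by at most `exp (c² / 2 - c Mₜ)`, where `Mₜ` is the forecaster's mixed loss. Starting from
`W_0 = N` and bounding `W_n` below by the term of the best expert, taking logarithms gives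
`∑ Mₜ - min_i Lᵢ_n ≤ ln N / c + n c / 2`; convexity of the loss bounds the forecaster's loss
by `Mₜ` (Jensen), and at `η = √(2 ln N)` the two terms of `η / 2 + ln N / η` balance.
-/

open Real Finset

theorem Real.exp_neg_le_one_sub_add_sq_div_two {x : ℝ} (hx : 0 ≤ x) :
    exp (-x) ≤ 1 - x + x ^ 2 / 2 := by
  have hq := quadratic_le_exp_of_nonneg hx
  rw [exp_neg, inv_le_iff_one_le_mul₀' (exp_pos x)]
  nlinarith [sq_nonneg (x - 1), sq_nonneg (x ^ 2)]

theorem sum_mul_exp_neg_mul_le_exp {ι : Type*} [Fintype ι] {p ℓ : ι → ℝ} {c : ℝ}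
    (hc : 0 ≤ c) (hp : ∀ i, 0 ≤ p i) (hp1 : ∑ i, p i = 1) (hℓ : ∀ i, ℓ i ∈ Set.Icc 0 1) :
    ∑ i, p i * exp (-(c * ℓ i)) ≤ exp (c ^ 2 / 2 - c * ∑ i, p i * ℓ i) := by
  have hterm (i : ι) : exp (-(c * ℓ i)) ≤ 1 - c * ℓ i + c ^ 2 / 2 := by
    obtain ⟨h0, h1⟩ := hℓ i
    have hsq : (c * ℓ i) ^ 2 ≤ c ^ 2 := by
      rw [mul_pow]; exact mul_le_of_le_one_right (sq_nonneg c) (pow_le_one₀ h0 h1)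
    linarith [exp_neg_le_one_sub_add_sq_div_two (mul_nonneg hc h0)]
  calc ∑ i, p i * exp (-(c * ℓ i))
      ≤ ∑ i, p i * (1 - c * ℓ i + c ^ 2 / 2) :=
        sum_le_sum fun i _ => mul_le_mul_of_nonneg_left (hterm i) (hp i)
    _ = 1 + (c ^ 2 / 2 - c * ∑ i, p i * ℓ i) := by
        have (i : ι) :
            p i * (1 - c * ℓ i + c ^ 2 / 2) = p i * (1 + c ^ 2 / 2) - c * (p i * ℓ i) := by
          ring
        simp only [this, sum_sub_distrib, ← sum_mul, ← mul_sum, hp1]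
        ring
    _ ≤ exp (c ^ 2 / 2 - c * ∑ i, p i * ℓ i) := by
        linarith [add_one_le_exp (c ^ 2 / 2 - c * ∑ i, p i * ℓ i)]

theorem le_mul_exp_sum_of_succ_le {W g : ℕ → ℝ} (h : ∀ t, W (t + 1) ≤ W t * exp (g t))
    (n : ℕ) :
    W n ≤ W 0 * exp (∑ t ∈ range n, g t) := by
  induction n with
  | zero => simp
  | succ n ih =>
    calc W (n + 1) ≤ W n * exp (g n) := h n
      _ ≤ W 0 * exp (∑ t ∈ range n, g t) * exp (g n) :=
        mul_le_mul_of_nonneg_right ih (exp_pos _).le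
      _ = W 0 * exp (∑ t ∈ range (n + 1), g t) := by rw [sum_range_succ, exp_add, mul_assoc]

noncomputable section ExpWeights

variable {ι : Type*} [Fintype ι] (c : ℝ) (ℓ : ℕ → ι → ℝ)

def cumLoss (t : ℕ) (i : ι) : ℝ := ∑ s ∈ range t, ℓ s i

def expPotential (t : ℕ) : ℝ := ∑ i, exp (-(c * cumLoss ℓ t i))

def expWeights (t : ℕ) (i : ι) : ℝ := exp (-(c * cumLoss ℓ t i)) / expPotential c ℓ t

variable {c ℓ}

theorem expPotential_pos [Nonempty ι] (t : ℕ) : 0 < expPotential c ℓ t :=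
  sum_pos (fun _ _ => exp_pos _) univ_nonempty

theorem expPotential_zero : expPotential c ℓ 0 = Fintype.card ι := by
  simp [expPotential, cumLoss]

theorem exp_neg_mul_cumLoss_le_expPotential (t : ℕ) (i : ι) :
    exp (-(c * cumLoss ℓ t i)) ≤ expPotential c ℓ t :=
  single_le_sum (f := fun j => exp (-(c * cumLoss ℓ t j))) (fun _ _ => (exp_pos _).le)
    (mem_univ i)

theorem expWeights_nonneg (t : ℕ) (i : ι) : 0 ≤ expWeights c ℓ t i :=
  div_nonneg (exp_pos _).le (sum_nonneg fun _ _ => (exp_pos _).le)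

theorem sum_expWeights [Nonempty ι] (t : ℕ) : ∑ i, expWeights c ℓ t i = 1 := by
  simp only [expWeights]
  rw [← sum_div]
  exact div_self (expPotential_pos t).ne'

theorem expPotential_succ [Nonempty ι] (t : ℕ) :
    expPotential c ℓ (t + 1) =
      expPotential c ℓ t * ∑ i, expWeights c ℓ t i * exp (-(c * ℓ t i)) := by
  have hW := (expPotential_pos (c := c) (ℓ := ℓ) t).ne'
  rw [mul_sum]
  refine sum_congr rfl fun i _ => ?_
  rw [expWeights, cumLoss, sum_range_succ, ← cumLoss, mul_add, neg_add, exp_add]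
  field_simp

theorem expPotential_succ_le [Nonempty ι] (hc : 0 ≤ c) (hℓ : ∀ t i, ℓ t i ∈ Set.Icc 0 1)
    (t : ℕ) :
    expPotential c ℓ (t + 1) ≤
      expPotential c ℓ t * exp (c ^ 2 / 2 - c * ∑ i, expWeights c ℓ t i * ℓ t i) := by
  rw [expPotential_succ]
  exact mul_le_mul_of_nonneg_left
    (sum_mul_exp_neg_mul_le_exp hc (expWeights_nonneg t) (sum_expWeights t) (hℓ t))
    (expPotential_pos t).le

theorem sum_expWeights_mul_sub_cumLoss_le [Nonempty ι] (hc : 0 < c)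
    (hℓ : ∀ t i, ℓ t i ∈ Set.Icc 0 1) (n : ℕ) (i : ι) :
    ∑ t ∈ range n, ∑ j, expWeights c ℓ t j * ℓ t j - cumLoss ℓ n i ≤
      log (Fintype.card ι) / c + n * c / 2 := by
  have hW := (exp_neg_mul_cumLoss_le_expPotential n i).trans
    (le_mul_exp_sum_of_succ_le (expPotential_succ_le hc.le hℓ) n)
  rw [expPotential_zero, ← log_le_log_iff (exp_pos _) (by positivity), log_exp,
    log_mul (by simp) (exp_pos _).ne', log_exp, sum_sub_distrib, sum_const, card_range,
    nsmul_eq_mul, ← mul_sum] at hW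
  rw [div_add' _ _ _ hc.ne', le_div_iff₀ hc]
  linarith

end ExpWeights

theorem half_add_div_eq_self_of_eq_sqrt {a η : ℝ} (ha : 0 ≤ a) (hη : η = √(2 * a)) :
    η / 2 + a / η = η := by
  rcases ha.eq_or_lt with rfl | ha
  · simp [hη]
  have hη0 : 0 < η := hη ▸ sqrt_pos.2 (by positivity)
  have hsq : η ^ 2 = 2 * a := hη ▸ sq_sqrt (by positivity)
  field_simp
  linarith

/-- For the exponentially weighted average forecaster (exponential
potential `Φ(x) = η⁻¹ ln ∑ e^{η xᵢ}`), the regret bound of the verification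
theorem reads `R_n/√n ≤ η/2 + (ln N)/η`, and the choice `η = √(2 ln N)` yields
`R_n ≤ √(2 n ln N)`. -/
theorem statement_8 {V B : Type*} [AddCommGroup V] [Module ℝ V] {N n : ℕ}
    (hN : 2 ≤ N) (hn : 0 < n)
    (A : Set V) (l : V → B → ℝ)
    (hl01 : ∀ a ∈ A, ∀ b, l a b ∈ Set.Icc (0 : ℝ) 1)
    (hconv : ∀ b, ConvexOn ℝ A (fun a => l a b))
    (η : ℝ) (hη : 0 < η)
    (f : ℕ → Fin N → V) (hf : ∀ t i, f t i ∈ A) (b : ℕ → B)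
    (L : ℕ → Fin N → ℝ) (hL : ∀ t i, L t i = ∑ s ∈ Finset.range t, l (f s i) (b s))
    (p : ℕ → Fin N → ℝ)
    (hp : ∀ t i, p t i = Real.exp (-η * L t i / Real.sqrt n) /
      ∑ j, Real.exp (-η * L t j / Real.sqrt n)) :
    ((∑ t ∈ Finset.range n, l (∑ j, p t j • f t j) (b t)) -
        (Finset.univ.inf'
          (Finset.univ_nonempty_iff.mpr (Fin.pos_iff_nonempty.mp (by omega)))
          (fun i => ∑ t ∈ Finset.range n, l (f t i) (b t)))
      ≤ (η / 2 + Real.log N / η) * Real.sqrt n) ∧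
    (η = Real.sqrt (2 * Real.log N) →
      (∑ t ∈ Finset.range n, l (∑ j, p t j • f t j) (b t)) -
        (Finset.univ.inf'
          (Finset.univ_nonempty_iff.mpr (Fin.pos_iff_nonempty.mp (by omega)))
          (fun i => ∑ t ∈ Finset.range n, l (f t i) (b t)))
      ≤ Real.sqrt (2 * n * Real.log N)) := by
  have : Nonempty (Fin N) := ⟨⟨0, by omega⟩⟩
  have hsqrt_n : 0 < √(n : ℝ) := sqrt_pos.2 (Nat.cast_pos.2 hn)
  set ℓ : ℕ → Fin N → ℝ := fun t i => l (f t i) (b t)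
  have hp' : p = expWeights (η / √n) ℓ := by
    funext t i
    simp only [hp, expWeights, expPotential, cumLoss, ℓ, ← hL, neg_mul, neg_div,
      div_mul_eq_mul_div]
  have hjensen (t : ℕ) : l (∑ j, p t j • f t j) (b t) ≤ ∑ j, p t j * ℓ t j := by
    rw [hp']
    exact (hconv (b t)).map_sum_le (fun j _ => expWeights_nonneg t j) (sum_expWeights t)
      (fun j _ => hf t j)
  have hscale : log N / (η / √n) + n * (η / √n) / 2 = (η / 2 + log N / η) * √n := by
    field_simp
    rw [sq_sqrt (Nat.cast_nonneg n)]
    ring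
  obtain ⟨i, -, hi⟩ := exists_mem_eq_inf' univ_nonempty fun i => ∑ t ∈ range n, ℓ t i
  have hregret : ∑ t ∈ range n, ∑ j, p t j * ℓ t j - cumLoss ℓ n i ≤
      (η / 2 + log N / η) * √n := by
    have h := sum_expWeights_mul_sub_cumLoss_le (div_pos hη hsqrt_n)
      (fun t i => hl01 _ (hf t i) (b t)) n i
    rwa [Fintype.card_fin, hscale, ← hp'] at h
  have hbound : ∑ t ∈ range n, l (∑ j, p t j • f t j) (b t) - ∑ t ∈ range n, ℓ t i ≤
      (η / 2 + log N / η) * √n :=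
    (sub_le_sub_right (sum_le_sum fun t _ => hjensen t) _).trans hregret
  rw [hi]
  refine ⟨hbound, fun hηeq => hbound.trans_eq ?_⟩
  rw [half_add_div_eq_self_of_eq_sqrt (log_natCast_nonneg N) hηeq, hηeq,
    ← sqrt_mul (by positivity), mul_right_comm]
end

section
/- Blackwell condition for the chosen strategy: if l is convex in its first argument and Φ : ℝ^N → ℝ is differentiable with Φ_x(x) ≥ 0 (componentwise) and Φ_x(x) ≠ 0, then the weighted average forecast p*(x,f) = Φ_x(x)/⟨Φ_x(x),1⟩ satisfies ⟨Φ_x(x), r(p*(x,f), f, b)⟩ ≤ 0 for all f ∈ A^N and b ∈ B. -/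
open Finset

theorem Finset.centerMass_eq_sum_div_smul {ι V : Type*} [AddCommGroup V] [Module ℝ V]
    (t : Finset ι) (w : ι → ℝ) (p : ι → V) :
    t.centerMass w p = ∑ j ∈ t, (w j / ∑ k ∈ t, w k) • p j := by
  simp only [centerMass, smul_sum, smul_smul, div_eq_inv_mul]

theorem ConvexOn.sum_mul_sub_map_le_zero {ι V : Type*} [AddCommGroup V] [Module ℝ V]
    {A : Set V} {φ : V → ℝ} (hφ : ConvexOn ℝ A φ) {t : Finset ι} {w : ι → ℝ} {p : ι → V}
    (hw : ∀ i ∈ t, 0 ≤ w i) (hpos : 0 < ∑ i ∈ t, w i) (hp : ∀ i ∈ t, p i ∈ A) :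
    ∑ i ∈ t, w i * (φ (t.centerMass w p) - φ (p i)) ≤ 0 := by
  have hsplit : ∑ i ∈ t, w i * (φ (t.centerMass w p) - φ (p i)) =
      (∑ i ∈ t, w i) * (φ (t.centerMass w p) - t.centerMass w (φ ∘ p)) := by
    simp only [centerMass, smul_eq_mul, Function.comp, mul_sub, sum_sub_distrib, ← sum_mul,
      mul_inv_cancel_left₀ hpos.ne']
  rw [hsplit]
  exact mul_nonpos_of_nonneg_of_nonpos hpos.le
    (sub_nonpos.2 (hφ.map_centerMass_le hw hpos hp))

theorem statement_15_general {V B : Type*} [AddCommGroup V] [Module ℝ V] {N : ℕ}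
    (A : Set V) (l : V → B → ℝ)
    (hconv : ∀ b, ConvexOn ℝ A (fun a => l a b))
    (Φ : (Fin N → ℝ) → ℝ) (x : Fin N → ℝ)
    (hgrad0 : ∀ i, 0 ≤ fderiv ℝ Φ x (Pi.single i 1))
    (hgradne : ∃ i, fderiv ℝ Φ x (Pi.single i 1) ≠ 0) :
    ∀ (f : Fin N → V), (∀ i, f i ∈ A) → ∀ b : B,
      ∑ i, fderiv ℝ Φ x (Pi.single i 1) *
        (l (∑ j, (fderiv ℝ Φ x (Pi.single j 1) /
            ∑ k, fderiv ℝ Φ x (Pi.single k 1)) • f j) b - l (f i) b) ≤ 0 := by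
  intro f hf b
  set w : Fin N → ℝ := fun i => fderiv ℝ Φ x (Pi.single i 1)
  obtain ⟨i₀, hi₀⟩ := hgradne
  have hpos : 0 < ∑ i, w i :=
    sum_pos' (fun i _ => hgrad0 i) ⟨i₀, mem_univ i₀, (hgrad0 i₀).lt_of_ne' hi₀⟩
  rw [← centerMass_eq_sum_div_smul]
  exact (hconv b).sum_mul_sub_map_le_zero (fun i _ => hgrad0 i) hpos (fun i _ => hf i)

/-- Blackwell condition for the weighted average forecaster.
If `l` is convex in its first argument and `Φ` is differentiable with
componentwise nonnegative, nonzero gradient at `x`, then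
`p*(x,f) = Φ_x(x)/⟨Φ_x(x),1⟩` satisfies `⟨Φ_x(x), r(p*(x,f),f,b)⟩ ≤ 0`
for all `f ∈ Aᴺ` and `b ∈ B`. -/
theorem statement_15 {V B : Type*} [AddCommGroup V] [Module ℝ V] {N : ℕ}
    (hN : 0 < N) (A : Set V) (hA : Convex ℝ A) (l : V → B → ℝ)
    (hl01 : ∀ a ∈ A, ∀ b, l a b ∈ Set.Icc (0 : ℝ) 1)
    (hconv : ∀ b, ConvexOn ℝ A (fun a => l a b))
    (Φ : (Fin N → ℝ) → ℝ) (x : Fin N → ℝ) (hdiff : DifferentiableAt ℝ Φ x)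
    (hgrad0 : ∀ i, 0 ≤ fderiv ℝ Φ x (Pi.single i 1))
    (hgradne : ∃ i, fderiv ℝ Φ x (Pi.single i 1) ≠ 0) :
    ∀ (f : Fin N → V), (∀ i, f i ∈ A) → ∀ b : B,
      ∑ i, fderiv ℝ Φ x (Pi.single i 1) *
        (l (∑ j, (fderiv ℝ Φ x (Pi.single j 1) /
            ∑ k, fderiv ℝ Φ x (Pi.single k 1)) • f j) b - l (f i) b) ≤ 0 :=
  statement_15_general A l hconv Φ x hgrad0 hgradne
end

section
/- One-round potential decrease for the exponential potential: let q ∈ Δ, ℓ ∈ [0,1]^N, and L ∈ [0,1] with L ≤ Σⱼ qⱼ ℓⱼ (e.g. L = l(⟨q,f⟩,b) under convexity). Set rᵢ = L − ℓᵢ and Φ(x) = η⁻¹ ln Σᵢ e^{η xᵢ}. If qᵢ = e^{η xᵢ}/Σₖ e^{η xₖ}, then Φ(x + δ r) ≤ Φ(x) + η δ²/2 for all δ ∈ [0,1]. -/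
/-!
Hoeffding's lemma in the form `exp (t s) ≤ cosh t + s sinh t ≤ …` for `s ∈ [-1, 1]` (convexity of
`exp` on the chord from `-t` to `t`). Averaged against the softmax weights of `x`, under which the
regret vector `r` has nonpositive mean (Blackwell's condition), the `sinh` term drops and
`cosh t ≤ exp (t² / 2)` bounds the growth of `∑ᵢ exp (η xᵢ)` when `x` moves to `x + δ r`.
-/

open Real Finset

lemma exp_mul_le_cosh_add_mul_sinh (t : ℝ) {s : ℝ} (hs : s ∈ Set.Icc (-1 : ℝ) 1) :
    exp (t * s) ≤ cosh t + s * sinh t := by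
  have h := convexOn_exp.2 (Set.mem_univ (-t)) (Set.mem_univ t)
    (by linarith [hs.2] : 0 ≤ (1 - s) / 2) (by linarith [hs.1] : 0 ≤ (1 + s) / 2) (by ring)
  simp only [smul_eq_mul] at h
  calc exp (t * s) = exp ((1 - s) / 2 * -t + (1 + s) / 2 * t) := by ring_nf
    _ ≤ (1 - s) / 2 * exp (-t) + (1 + s) / 2 * exp t := h
    _ = cosh t + s * sinh t := by rw [cosh_eq, sinh_eq]; ring

section

variable {ι : Type*} [Fintype ι]

lemma sum_mul_exp_mul_le_of_sum_mul_nonpos {w s : ι → ℝ} (hw : ∀ i, 0 ≤ w i)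
    (hs : ∀ i, s i ∈ Set.Icc (-1 : ℝ) 1) (hws : ∑ i, w i * s i ≤ 0) {t : ℝ} (ht : 0 ≤ t) :
    ∑ i, w i * exp (t * s i) ≤ (∑ i, w i) * exp (t ^ 2 / 2) :=
  calc ∑ i, w i * exp (t * s i)
      ≤ ∑ i, w i * (cosh t + s i * sinh t) :=
        sum_le_sum fun i _ => mul_le_mul_of_nonneg_left
          (exp_mul_le_cosh_add_mul_sinh t (hs i)) (hw i)
    _ = (∑ i, w i) * cosh t + sinh t * ∑ i, w i * s i := by
        simp only [mul_add, sum_add_distrib, sum_mul, mul_sum]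
        congr 1
        exact sum_congr rfl fun i _ => by ring
    _ ≤ (∑ i, w i) * cosh t := by
        linarith [mul_nonpos_of_nonneg_of_nonpos (sinh_nonneg_iff.2 ht) hws]
    _ ≤ (∑ i, w i) * exp (t ^ 2 / 2) :=
        mul_le_mul_of_nonneg_left (cosh_le_exp_half_sq t) (sum_nonneg fun i _ => hw i)

lemma log_sum_exp_add_mul_le [Nonempty ι] (x r : ι → ℝ) (hr : ∀ i, r i ∈ Set.Icc (-1 : ℝ) 1)
    (hxr : ∑ i, exp (x i) * r i ≤ 0) {t : ℝ} (ht : 0 ≤ t) :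
    log (∑ i, exp (x i + t * r i)) ≤ log (∑ i, exp (x i)) + t ^ 2 / 2 := by
  have hS : 0 < ∑ i, exp (x i) := sum_pos (fun i _ => exp_pos _) univ_nonempty
  have hsum : ∑ i, exp (x i + t * r i) ≤ (∑ i, exp (x i)) * exp (t ^ 2 / 2) := by
    simp only [exp_add]
    exact sum_mul_exp_mul_le_of_sum_mul_nonpos (fun i => (exp_pos _).le) hr hxr ht
  calc log (∑ i, exp (x i + t * r i))
      ≤ log ((∑ i, exp (x i)) * exp (t ^ 2 / 2)) :=
        log_le_log (sum_pos (fun i _ => exp_pos _) univ_nonempty) hsum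
    _ = log (∑ i, exp (x i)) + t ^ 2 / 2 := by rw [log_mul hS.ne' (exp_pos _).ne', log_exp]

lemma sum_exp_mul_sub_nonpos_of_le_softmax_mean [Nonempty ι] {y q ℓ : ι → ℝ} {L : ℝ}
    (hq : ∀ i, q i = exp (y i) / ∑ k, exp (y k)) (hLq : L ≤ ∑ j, q j * ℓ j) :
    ∑ j, exp (y j) * (L - ℓ j) ≤ 0 := by
  set S := ∑ k, exp (y k)
  have hS : 0 < S := sum_pos (fun i _ => exp_pos _) univ_nonempty
  have hq_sum : ∑ j, q j = 1 := by
    simp only [hq, ← sum_div]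
    exact div_self hS.ne'
  have hexp : ∀ j, exp (y j) = S * q j := fun j => by
    rw [hq j, mul_div_cancel₀ _ hS.ne']
  calc ∑ j, exp (y j) * (L - ℓ j)
      = S * (L * ∑ j, q j - ∑ j, q j * ℓ j) := by
        simp only [hexp, mul_sum, ← sum_sub_distrib]
        exact sum_congr rfl fun j _ => by ring
    _ ≤ 0 := mul_nonpos_of_nonneg_of_nonpos hS.le (by rw [hq_sum]; linarith)

end

theorem statement_18_general {N : ℕ} (hN : 0 < N) (η : ℝ) (hη : 0 < η)
    (x q ℓ r : Fin N → ℝ) (L : ℝ)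
    (hq : ∀ i, q i = Real.exp (η * x i) / ∑ k, Real.exp (η * x k))
    (hℓ : ∀ i, ℓ i ∈ Set.Icc (0 : ℝ) 1) (hL : L ∈ Set.Icc (0 : ℝ) 1)
    (hLq : L ≤ ∑ j, q j * ℓ j)
    (hr : ∀ i, r i = L - ℓ i)
    (δ : ℝ) (hδ0 : 0 ≤ δ) :
    η⁻¹ * Real.log (∑ j, Real.exp (η * (x + δ • r) j)) ≤
      η⁻¹ * Real.log (∑ j, Real.exp (η * x j)) + η * δ ^ 2 / 2 := by
  have : Nonempty (Fin N) := Fin.pos_iff_nonempty.mp hN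
  have hr_mem : ∀ i, r i ∈ Set.Icc (-1 : ℝ) 1 := fun i => by
    rw [hr i]
    constructor <;> linarith [(hℓ i).1, (hℓ i).2, hL.1, hL.2]
  have hblackwell : ∑ j, exp (η * x j) * r j ≤ 0 := by
    simpa only [hr] using sum_exp_mul_sub_nonpos_of_le_softmax_mean hq hLq
  have hlog := log_sum_exp_add_mul_le (fun j => η * x j) r hr_mem hblackwell
    (mul_nonneg hη.le hδ0)
  have hstep : ∀ j, η * (x + δ • r) j = η * x j + η * δ * r j := fun j => by
    simp only [Pi.add_apply, Pi.smul_apply, smul_eq_mul]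
    ring
  simp only [hstep]
  calc η⁻¹ * log (∑ j, exp (η * x j + η * δ * r j))
      ≤ η⁻¹ * (log (∑ j, exp (η * x j)) + (η * δ) ^ 2 / 2) :=
        mul_le_mul_of_nonneg_left hlog (inv_nonneg.2 hη.le)
    _ = η⁻¹ * log (∑ j, exp (η * x j)) + η * δ ^ 2 / 2 := by field_simp

/-- One-round potential decrease for the exponential potential.
With `q` the softmax weights of `x`, `ℓ ∈ [0,1]ᴺ`, `L ∈ [0,1]` with
`L ≤ ∑ⱼ qⱼℓⱼ`, and `rᵢ = L − ℓᵢ`, one has `Φ(x + δr) ≤ Φ(x) + ηδ²/2`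
for every `δ ∈ [0,1]`, where `Φ(x) = η⁻¹ ln ∑ᵢ e^{η xᵢ}`. -/
theorem statement_18 {N : ℕ} (hN : 0 < N) (η : ℝ) (hη : 0 < η)
    (x q ℓ r : Fin N → ℝ) (L : ℝ)
    (hq : ∀ i, q i = Real.exp (η * x i) / ∑ k, Real.exp (η * x k))
    (hℓ : ∀ i, ℓ i ∈ Set.Icc (0 : ℝ) 1) (hL : L ∈ Set.Icc (0 : ℝ) 1)
    (hLq : L ≤ ∑ j, q j * ℓ j)
    (hr : ∀ i, r i = L - ℓ i)
    (δ : ℝ) (hδ0 : 0 ≤ δ) (hδ1 : δ ≤ 1) :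
    η⁻¹ * Real.log (∑ j, Real.exp (η * (x + δ • r) j)) ≤
      η⁻¹ * Real.log (∑ j, Real.exp (η * x j)) + η * δ ^ 2 / 2 :=
  statement_18_general hN η hη x q ℓ r L hq hℓ hL hLq hr δ hδ0
end
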